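/- arXiv:1107.1869 — 9 statements merged into one kernel-verified Lean document; each statement's English description precedes it below -/
import Mathlib

section
/- If H = (V,E) is an n-uniform hypergraph (n ≥ 2) whose edges are pairwise intersecting (a clique) and E is nonempty, then the chromatic number of H is at most 3, i.e., there is a coloring of V with 3 colors such that no edge is monochromatic. -/
/-- A proper coloring with `k` colors: every edge contains two vertices of
different colors. -/
def ProperColoring {V : Type*} (E : Finset (Finset V)) (k : ℕ) : Prop :=
  ∃ c : V → Fin k, ∀ e ∈ E, ∃ u ∈ e, ∃ v ∈ e, c u ≠ c v

theorem clique_chromatic_le_three {V : Type*} [DecidableEq V] (n : ℕ) (hn : 2 ≤ n)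
    (E : Finset (Finset V)) (hne : E.Nonempty)
    (huniform : ∀ e ∈ E, e.card = n)
    (hclique : ∀ e ∈ E, ∀ f ∈ E, (e ∩ f).Nonempty) :
    ProperColoring E 3 := by
  obtain ⟨e₀, he₀⟩ := hne
  have hcard : 2 ≤ e₀.card := (huniform e₀ he₀) ▸ hn
  obtain ⟨x, hx⟩ : e₀.Nonempty := Finset.card_pos.mp (by omega)
  refine ⟨fun v => if v = x then 0 else if v ∈ e₀ then 1 else 2, ?_⟩
  intro f hf
  by_cases hfe : f = e₀
  · subst hfe
    obtain ⟨y, hy, hyx⟩ := Finset.exists_mem_ne hcard x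
    refine ⟨x, hx, y, hy, ?_⟩
    simp [hyx, hy]
  · have hns : ¬ f ⊆ e₀ := by
      intro hsub
      exact hfe (Finset.eq_of_subset_of_card_le hsub
        (by rw [huniform f hf, huniform e₀ he₀]))
    obtain ⟨z, hz, hze⟩ := Finset.not_subset.mp hns
    obtain ⟨y, hy⟩ := hclique f hf e₀ he₀
    rw [Finset.mem_inter] at hy
    refine ⟨y, hy.1, z, hz, ?_⟩
    have hzx : z ≠ x := fun h => hze (h ▸ hx)
    by_cases hyx : y = x <;> simp [hyx, hy.2, hzx, hze]
end

section
/- If H = (V,E) is an n-uniform clique with chromatic number equal to 3, then τ(H) = n. -/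
theorem clique_chromatic_three_cover_eq_n {V : Type*} [DecidableEq V] (n : ℕ)
    (E : Finset (Finset V))
    (huniform : ∀ e ∈ E, e.card = n)
    (hclique : ∀ e ∈ E, ∀ f ∈ E, (e ∩ f).Nonempty)
    (hno2 : ¬ ∃ c : V → Fin 2, ∀ e ∈ E, ∃ u ∈ e, ∃ v ∈ e, c u ≠ c v)
    (hyes3 : ∃ c : V → Fin 3, ∀ e ∈ E, ∃ u ∈ e, ∃ v ∈ e, c u ≠ c v) :
    (∃ f : Finset V, f.card = n ∧ ∀ e ∈ E, (f ∩ e).Nonempty) ∧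
      (∀ f : Finset V, (∀ e ∈ E, (f ∩ e).Nonempty) → n ≤ f.card) := by
  -- E is nonempty, else any coloring works
  obtain ⟨e₀, he₀⟩ : ∃ e, e ∈ E := by
    by_contra h
    push_neg at h
    exact hno2 ⟨fun _ => 0, fun e he => absurd he (h e)⟩
  constructor
  · exact ⟨e₀, huniform e₀ he₀, fun e he => hclique e₀ he₀ e he⟩
  · intro f hf
    by_contra h
    push_neg at h
    apply hno2
    refine ⟨fun v => if v ∈ f then 0 else 1, fun e he => ?_⟩
    obtain ⟨u, hu⟩ := hf e he
    rw [Finset.mem_inter] at hu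
    have hlt : f.card < e.card := by rw [huniform e he]; exact h
    obtain ⟨v, hv⟩ : (e \ f).Nonempty := by
      rw [← Finset.card_pos]
      have := Finset.le_card_sdiff f e
      omega
    rw [Finset.mem_sdiff] at hv
    refine ⟨u, hu.2, v, hv.1, ?_⟩
    simp [hu.1, hv.2]
end

section
/- Let H = (V,E) be an n-uniform clique with χ(H) = 3, let 1 ≤ k ≤ n, and let W ⊆ V with |W| = k. Then the number of edges e ∈ E containing W is at most n^{n-k}. -/
theorem erdos_lovasz_edges_through_set {V : Type*} [DecidableEq V] (n k : ℕ)
    (E : Finset (Finset V))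
    (huniform : ∀ e ∈ E, e.card = n)
    (hclique : ∀ e ∈ E, ∀ f ∈ E, (e ∩ f).Nonempty)
    (hno2 : ¬ ∃ c : V → Fin 2, ∀ e ∈ E, ∃ u ∈ e, ∃ v ∈ e, c u ≠ c v)
    (hyes3 : ∃ c : V → Fin 3, ∀ e ∈ E, ∃ u ∈ e, ∃ v ∈ e, c u ≠ c v)
    (hk1 : 1 ≤ k) (hkn : k ≤ n) (W : Finset V) (hW : W.card = k) :
    (E.filter (fun e => W ⊆ e)).card ≤ n ^ (n - k) := by
  suffices h : ∀ d k (W : Finset V), k ≤ n → n - k = d → W.card = k →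
      (E.filter (fun e => W ⊆ e)).card ≤ n ^ d from h (n - k) k W hkn rfl hW
  intro d
  induction d with
  | zero =>
    intro k W hkn hd hW
    have hkn' : k = n := by omega
    have : E.filter (fun e => W ⊆ e) ⊆ {W} := by
      intro e he
      simp only [Finset.mem_filter] at he
      have hcard : e.card ≤ W.card := by
        rw [huniform e he.1, hW, hkn']
      rw [Finset.mem_singleton]
      exact (Finset.eq_of_subset_of_card_le he.2 hcard).symm
    calc (E.filter (fun e => W ⊆ e)).card ≤ ({W} : Finset (Finset V)).card :=
          Finset.card_le_card this
      _ = 1 := Finset.card_singleton _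
      _ = n ^ 0 := (pow_zero n).symm
  | succ d ih =>
    intro k W hkn hd hW
    have hklt : k < n := by omega
    by_cases hdisj : ∃ e0 ∈ E, Disjoint e0 W
    · obtain ⟨e0, he0E, hdis⟩ := hdisj
      have hsub : E.filter (fun e => W ⊆ e) ⊆
          e0.biUnion (fun v => E.filter (fun e => insert v W ⊆ e)) := by
        intro f hf
        simp only [Finset.mem_filter] at hf
        obtain ⟨hfE, hWf⟩ := hf
        obtain ⟨v, hv⟩ := hclique f hfE e0 he0E
        rw [Finset.mem_inter] at hv
        refine Finset.mem_biUnion.2 ⟨v, hv.2, ?_⟩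
        simp only [Finset.mem_filter]
        exact ⟨hfE, Finset.insert_subset hv.1 hWf⟩
      calc (E.filter (fun e => W ⊆ e)).card
          ≤ (e0.biUnion (fun v => E.filter (fun e => insert v W ⊆ e))).card :=
            Finset.card_le_card hsub
        _ ≤ ∑ v ∈ e0, (E.filter (fun e => insert v W ⊆ e)).card :=
            Finset.card_biUnion_le
        _ ≤ ∑ _v ∈ e0, n ^ d := by
            apply Finset.sum_le_sum
            intro v hv
            have hvW : v ∉ W := fun hmem => (Finset.disjoint_left.1 hdis hv) hmem
            have hcard : (insert v W).card = k + 1 := by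
              rw [Finset.card_insert_of_notMem hvW, hW]
            exact ih (k + 1) (insert v W) (by omega) (by omega) hcard
        _ = e0.card * n ^ d := by rw [Finset.sum_const, smul_eq_mul]
        _ = n ^ (d + 1) := by rw [huniform e0 he0E, pow_succ, mul_comm]
    · push_neg at hdisj
      exfalso
      apply hno2
      refine ⟨fun v => if v ∈ W then 0 else 1, fun e heE => ?_⟩
      obtain ⟨u, hue, huW⟩ := Finset.not_disjoint_iff.1 (hdisj e heE)
      have hns : ¬ e ⊆ W := by
        intro hsub
        have := Finset.card_le_card hsub
        rw [huniform e heE, hW] at this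
        omega
      obtain ⟨v, hve, hvW⟩ := Finset.not_subset.1 hns
      exact ⟨u, hue, v, hve, by simp [huW, hvW]⟩
end

section
/- Any n-uniform clique H = (V,E) with chromatic number 3 has at most n^n edges. -/
/-!
Non-2-colourability forces every set of fewer than `n` vertices to miss an edge. Given such a
`T`, pick an edge `g` disjoint from it: every edge through `T` meets `g`, hence passes through
`insert v T` for one of the `n` vertices `v ∈ g`. Iterating from `T = ∅` branches `n` ways at
most `n` times, so there are at most `n ^ n` edges.
-/

section IntersectingFamily

variable {V : Type*} [DecidableEq V] {n : ℕ} {E : Finset (Finset V)}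

lemma exists_disjoint_edge_of_card_lt (huniform : ∀ e ∈ E, e.card = n)
    (hno2 : ¬ ∃ c : V → Fin 2, ∀ e ∈ E, ∃ u ∈ e, ∃ v ∈ e, c u ≠ c v)
    {T : Finset V} (hT : T.card < n) : ∃ g ∈ E, Disjoint g T := by
  by_contra! hmeets
  refine hno2 ⟨fun v => if v ∈ T then 0 else 1, fun e he => ?_⟩
  obtain ⟨x, hxe, hxT⟩ := Finset.not_disjoint_iff.mp (hmeets e he)
  obtain ⟨y, hye, hyT⟩ : ∃ y ∈ e, y ∉ T := Finset.not_subset.mp fun hsub =>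
    (Finset.card_le_card hsub).not_gt (huniform e he ▸ hT)
  exact ⟨x, hxe, y, hye, by simp [hxT, hyT]⟩

lemma card_filter_superset_le_pow (huniform : ∀ e ∈ E, e.card = n)
    (hclique : ∀ e ∈ E, ∀ f ∈ E, (e ∩ f).Nonempty)
    (hcover : ∀ T : Finset V, T.card < n → ∃ g ∈ E, Disjoint g T)
    (T : Finset V) (hT : T.card ≤ n) :
    (E.filter (T ⊆ ·)).card ≤ n ^ (n - T.card) := by
  induction hk : n - T.card generalizing T with
  | zero =>
    have hTn : T.card = n := by omega
    calc (E.filter (T ⊆ ·)).card ≤ ({T} : Finset (Finset V)).card := by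
          refine Finset.card_le_card fun e he => ?_
          obtain ⟨heE, hTe⟩ := Finset.mem_filter.mp he
          exact Finset.mem_singleton.mpr
            (Finset.eq_of_subset_of_card_le hTe (by rw [hTn, huniform e heE])).symm
      _ = n ^ 0 := by simp
  | succ k ih =>
    obtain ⟨g, hgE, hgT⟩ := hcover T (by omega)
    have hbranch : E.filter (T ⊆ ·) ⊆ g.biUnion fun v => E.filter (insert v T ⊆ ·) := by
      intro e he
      obtain ⟨heE, hTe⟩ := Finset.mem_filter.mp he
      obtain ⟨v, hv⟩ := hclique g hgE e heE
      obtain ⟨hvg, hve⟩ := Finset.mem_inter.mp hv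
      exact Finset.mem_biUnion.mpr
        ⟨v, hvg, Finset.mem_filter.mpr ⟨heE, Finset.insert_subset hve hTe⟩⟩
    have hstep : ∀ v ∈ g, (E.filter (insert v T ⊆ ·)).card ≤ n ^ k := fun v hv => by
      have hcard : (insert v T).card = T.card + 1 :=
        Finset.card_insert_of_notMem (Finset.disjoint_left.mp hgT hv)
      exact ih (insert v T) (by omega) (by omega)
    calc (E.filter (T ⊆ ·)).card
        ≤ ∑ v ∈ g, (E.filter (insert v T ⊆ ·)).card :=
          (Finset.card_le_card hbranch).trans Finset.card_biUnion_le
      _ ≤ g.card * n ^ k := Finset.sum_le_card_nsmul _ _ _ hstep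
      _ = n ^ (k + 1) := by rw [huniform g hgE, pow_succ']

end IntersectingFamily

theorem erdos_lovasz_upper_bound_general {V : Type*} [DecidableEq V] (n : ℕ)
    (E : Finset (Finset V))
    (huniform : ∀ e ∈ E, e.card = n)
    (hclique : ∀ e ∈ E, ∀ f ∈ E, (e ∩ f).Nonempty)
    (hno2 : ¬ ∃ c : V → Fin 2, ∀ e ∈ E, ∃ u ∈ e, ∃ v ∈ e, c u ≠ c v) :
    E.card ≤ n ^ n := by
  have hcover (T : Finset V) (hT : T.card < n) : ∃ g ∈ E, Disjoint g T :=
    exists_disjoint_edge_of_card_lt huniform hno2 hT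
  simpa using card_filter_superset_le_pow huniform hclique hcover ∅ (Nat.zero_le n)

theorem erdos_lovasz_upper_bound {V : Type*} [DecidableEq V] (n : ℕ)
    (E : Finset (Finset V))
    (huniform : ∀ e ∈ E, e.card = n)
    (hclique : ∀ e ∈ E, ∀ f ∈ E, (e ∩ f).Nonempty)
    (hno2 : ¬ ∃ c : V → Fin 2, ∀ e ∈ E, ∃ u ∈ e, ∃ v ∈ e, c u ≠ c v)
    (hyes3 : ∃ c : V → Fin 3, ∀ e ∈ E, ∃ u ∈ e, ∃ v ∈ e, c u ≠ c v) :
    E.card ≤ n ^ n :=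
  erdos_lovasz_upper_bound_general n E huniform hclique hno2
end

section
/- Let H = (V,E) be an n-uniform clique, B = {v ∈ V : deg v > |E|/n²}, and let t ∈ {1,…,n}. If some edge e ∈ E satisfies |e ∩ B| ≤ t, then there exists a vertex v with deg v ≥ |E|/(t+1). -/
/-!
Let `Δ` be the largest degree of a vertex of `e`. Since every edge meets `e`, the degrees on `e`
sum to at least `|E|`. Vertices of `e` outside `B` contribute at most `n · |E|/n² = |E|/n`, and the
at most `t` vertices of `e ∩ B` at most `tΔ`, so `|E| ≤ tΔ + |E|/n`. Averaging over the `n` vertices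
of `e` also gives `|E|/n ≤ Δ`, whence `|E| ≤ (t + 1)Δ`.
-/

open Finset

section

variable {V : Type*} [DecidableEq V]

def vertexDegree (E : Finset (Finset V)) (v : V) : ℕ := #{f ∈ E | v ∈ f}

theorem card_le_sum_vertexDegree_of_forall_inter_nonempty {E : Finset (Finset V)} {e : Finset V}
    (h : ∀ f ∈ E, (e ∩ f).Nonempty) : #E ≤ ∑ v ∈ e, vertexDegree E v := by
  have hcover : E ⊆ e.biUnion fun v => {f ∈ E | v ∈ f} := by
    intro f hf
    obtain ⟨v, hv⟩ := h f hf
    rw [mem_inter] at hv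
    exact mem_biUnion.mpr ⟨v, hv.1, mem_filter.mpr ⟨hf, hv.2⟩⟩
  exact (card_le_card hcover).trans card_biUnion_le

theorem sum_le_card_filter_gt_nsmul_add_card_nsmul {α R : Type*} [AddCommMonoid R] [LinearOrder R]
    [IsOrderedAddMonoid R] (s : Finset α) (f : α → R) {M c : R} (hM : ∀ x ∈ s, f x ≤ M)
    (hc : 0 ≤ c) : ∑ x ∈ s, f x ≤ #{x ∈ s | f x > c} • M + #s • c := by
  rw [← sum_filter_add_sum_filter_not s (fun x => f x > c)]
  gcongr
  · exact sum_le_card_nsmul _ _ _ fun x hx => hM x (mem_filter.mp hx).1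
  · calc ∑ x ∈ s with ¬f x > c, f x ≤ #{x ∈ s | ¬f x > c} • c :=
          sum_le_card_nsmul _ _ _ fun x hx => not_lt.mp (mem_filter.mp hx).2
      _ ≤ #s • c := nsmul_le_nsmul_left hc (card_le_card (filter_subset _ _))

end

theorem big_degree_from_small_intersection_general {V : Type*} [DecidableEq V] (n t : ℕ)
    (E : Finset (Finset V))
    (huniform : ∀ e ∈ E, e.card = n)
    (hclique : ∀ e ∈ E, ∀ f ∈ E, (e ∩ f).Nonempty)
    (e : Finset V) (he : e ∈ E)
    (heB : (e.filter
      (fun v => ((E.filter (fun f => v ∈ f)).card : ℝ) > (E.card : ℝ) / (n : ℝ) ^ 2)).card ≤ t) :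
    ∃ v : V, ((E.filter (fun f => v ∈ f)).card : ℝ) ≥ (E.card : ℝ) / ((t : ℝ) + 1) := by
  have hne : e.Nonempty := by simpa using hclique e he e he
  have hn : (0 : ℝ) < n := by rw [← huniform e he]; exact_mod_cast hne.card_pos
  obtain ⟨v, -, hmax⟩ := e.exists_max_image (vertexDegree E) hne
  refine ⟨v, show (vertexDegree E v : ℝ) ≥ _ from ?_⟩
  have hmax' : ∀ u ∈ e, (vertexDegree E u : ℝ) ≤ vertexDegree E v :=
    fun u hu => by exact_mod_cast hmax u hu
  have hcover : (#E : ℝ) ≤ ∑ u ∈ e, (vertexDegree E u : ℝ) := by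
    exact_mod_cast card_le_sum_vertexDegree_of_forall_inter_nonempty (hclique e he)
  set m : ℝ := (#E : ℝ)
  set Δ : ℝ := (vertexDegree E v : ℝ)
  have hsplit : m ≤ t * Δ + m / n := by
    have hsum := sum_le_card_filter_gt_nsmul_add_card_nsmul e (fun u => (vertexDegree E u : ℝ))
      hmax' (c := m / n ^ 2) (by positivity)
    simp only [nsmul_eq_mul, huniform e he] at hsum
    have hB : (#{u ∈ e | (vertexDegree E u : ℝ) > m / n ^ 2} : ℝ) ≤ t := by exact_mod_cast heB
    calc m ≤ _ := hcover.trans hsum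
      _ = #{u ∈ e | (vertexDegree E u : ℝ) > m / n ^ 2} * Δ + m / n := by field_simp
      _ ≤ t * Δ + m / n := by gcongr
  have havg : m / n ≤ Δ := by
    rw [div_le_iff₀ hn]
    have hsum := sum_le_card_nsmul e _ _ hmax'
    rw [huniform e he, nsmul_eq_mul] at hsum
    linarith
  rw [ge_iff_le, div_le_iff₀ (by positivity)]
  linarith

theorem big_degree_from_small_intersection {V : Type*} [DecidableEq V] (n t : ℕ)
    (E : Finset (Finset V)) (hne : E.Nonempty)
    (huniform : ∀ e ∈ E, e.card = n)
    (hclique : ∀ e ∈ E, ∀ f ∈ E, (e ∩ f).Nonempty)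
    (ht1 : 1 ≤ t) (htn : t ≤ n)
    (e : Finset V) (he : e ∈ E)
    (heB : (e.filter
      (fun v => ((E.filter (fun f => v ∈ f)).card : ℝ) > (E.card : ℝ) / (n : ℝ) ^ 2)).card ≤ t) :
    ∃ v : V, ((E.filter (fun f => v ∈ f)).card : ℝ) ≥ (E.card : ℝ) / ((t : ℝ) + 1) :=
  big_degree_from_small_intersection_general n t E huniform hclique e he heB
end

section
/- Let H = (V,E) be an n-uniform clique with χ(H) = 3, n ≥ 100, and |E| > n^{n-1/2}. Then there exist edges e, f ∈ E with ⌊√n⌋ ≤ |e ∩ f| ≤ n − ⌊√n⌋. -/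
theorem exists_medium_intersection {V : Type*} [DecidableEq V] (n : ℕ) (hn : 100 ≤ n)
    (E : Finset (Finset V))
    (huniform : ∀ e ∈ E, e.card = n)
    (hclique : ∀ e ∈ E, ∀ f ∈ E, (e ∩ f).Nonempty)
    (hno2 : ¬ ∃ c : V → Fin 2, ∀ e ∈ E, ∃ u ∈ e, ∃ v ∈ e, c u ≠ c v)
    (hyes3 : ∃ c : V → Fin 3, ∀ e ∈ E, ∃ u ∈ e, ∃ v ∈ e, c u ≠ c v)
    (hE : (E.card : ℝ) > (n : ℝ) ^ ((n : ℝ) - 1 / 2)) :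
    ∃ e ∈ E, ∃ f ∈ E,
      Nat.sqrt n ≤ (e ∩ f).card ∧ (e ∩ f).card ≤ n - Nat.sqrt n := by
  by_contra hcon
  push_neg at hcon
  set s := Nat.sqrt n with hs
  -- basic numeric facts about s
  have hs10 : 10 ≤ s := Nat.le_sqrt.mpr (by omega)
  have hssn : s * s ≤ n := by simpa [pow_two] using Nat.sqrt_le' n
  have hsn : s ≤ n := Nat.sqrt_le_self n
  have h2s : 2 * s ≤ n := le_trans (by nlinarith) hssn
  have h3s : 3 * s + 1 ≤ n := le_trans (by nlinarith) hssn
  -- dichotomy : intersections are small or large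
  have hdich : ∀ e ∈ E, ∀ f ∈ E, (e ∩ f).card < s ∨ n - s < (e ∩ f).card := by
    intro e he f hf
    by_cases h : (e ∩ f).card < s
    · exact Or.inl h
    · exact Or.inr (hcon e he f hf (le_of_not_gt h))
  -- no small transversal: every set of size < n misses some edge
  have hdisj : ∀ T : Finset V, T.card < n → ∃ g ∈ E, ∀ v ∈ g, v ∉ T := by
    intro T hT
    by_contra hng
    push_neg at hng
    refine hno2 ⟨fun v => if v ∈ T then 0 else 1, ?_⟩
    intro e he
    obtain ⟨u, hu, huT⟩ := hng e he
    have hns : ¬ e ⊆ T := by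
      intro hsub
      have := Finset.card_le_card hsub
      rw [huniform e he] at this
      omega
    obtain ⟨v, hv, hvT⟩ := Finset.not_subset.mp hns
    exact ⟨u, hu, v, hv, by simp [huT, hvT]⟩
  -- the branching counting machine
  have machine : ∀ (F : Finset (Finset V)), F ⊆ E → ∀ (m : ℕ), m ≤ n →
      (∀ T : Finset V, m ≤ T.card → ({f ∈ F | T ⊆ f}).card ≤ 1) →
      ∀ (k : ℕ) (T : Finset V), m ≤ T.card + k → ({f ∈ F | T ⊆ f}).card ≤ n ^ k := by
    intro F hFE m hmn hbase k
    induction k with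
    | zero =>
      intro T hT
      simpa using hbase T (by simpa using hT)
    | succ k ih =>
      intro T hT
      by_cases hTm : m ≤ T.card
      · exact le_trans (hbase T hTm) (Nat.one_le_pow _ _ (by omega))
      · obtain ⟨g, hgE, hg⟩ := hdisj T (by omega)
        have hsub : ({f ∈ F | T ⊆ f}) ⊆ g.biUnion (fun v => {f ∈ F | insert v T ⊆ f}) := by
          intro f hf
          simp only [Finset.mem_filter] at hf
          obtain ⟨hfF, hTf⟩ := hf
          obtain ⟨v, hv⟩ := hclique f (hFE hfF) g hgE
          rw [Finset.mem_inter] at hv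
          refine Finset.mem_biUnion.mpr ⟨v, hv.2, ?_⟩
          simp only [Finset.mem_filter]
          exact ⟨hfF, Finset.insert_subset hv.1 hTf⟩
        calc ({f ∈ F | T ⊆ f}).card ≤ (g.biUnion (fun v => {f ∈ F | insert v T ⊆ f})).card :=
              Finset.card_le_card hsub
          _ ≤ ∑ v ∈ g, ({f ∈ F | insert v T ⊆ f}).card := Finset.card_biUnion_le
          _ ≤ ∑ v ∈ g, n ^ k := by
              refine Finset.sum_le_sum fun v hv => ih _ ?_
              rw [Finset.card_insert_of_notMem (hg v hv)]
              omega
          _ = n * n ^ k := by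
              rw [Finset.sum_const, huniform g hgE, smul_eq_mul]
          _ = n ^ (k + 1) := by ring
  -- a maximal pairwise-far subfamily F
  have h0 : (∅ : Finset (Finset V)) ∈ (E.powerset).filter
      (fun F => ∀ a ∈ F, ∀ b ∈ F, a ≠ b → (a ∩ b).card < s) := by simp
  obtain ⟨F, hF, hFmax⟩ := Finset.exists_max_image _ Finset.card ⟨∅, h0⟩
  simp only [Finset.mem_filter, Finset.mem_powerset] at hF
  obtain ⟨hFE, hFfar⟩ := hF
  -- every edge is close to some member of F
  have hrep : ∀ f ∈ E, ∃ e0 ∈ F, n - s < (f ∩ e0).card := by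
    intro f hf
    by_cases hfF : f ∈ F
    · exact ⟨f, hfF, by rw [Finset.inter_self, huniform f hf]; omega⟩
    · by_contra hne
      push_neg at hne
      have hfar : ∀ e0 ∈ F, (f ∩ e0).card < s := by
        intro e0 he0
        rcases hdich f hf e0 (hFE he0) with h | h
        · exact h
        · exact absurd h (not_lt.mpr (hne e0 he0))
      have hmem : insert f F ∈ (E.powerset).filter
          (fun F => ∀ a ∈ F, ∀ b ∈ F, a ≠ b → (a ∩ b).card < s) := by
        simp only [Finset.mem_filter, Finset.mem_powerset]
        refine ⟨Finset.insert_subset hf hFE, ?_⟩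
        intro a ha b hb hab
        rcases Finset.mem_insert.mp ha with rfl | haF
        · rcases Finset.mem_insert.mp hb with rfl | hbF
          · exact absurd rfl hab
          · exact hfar b hbF
        · rcases Finset.mem_insert.mp hb with rfl | hbF
          · rw [Finset.inter_comm]; exact hfar a haF
          · exact hFfar a haF b hbF hab
      have := hFmax _ hmem
      rw [Finset.card_insert_of_notMem hfF] at this
      omega
  -- bound on |F|
  have hFcard : F.card ≤ n ^ s := by
    have hbase : ∀ T : Finset V, s ≤ T.card → ({f ∈ F | T ⊆ f}).card ≤ 1 := by
      intro T hT
      rw [Finset.card_le_one]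
      intro a ha b hb
      simp only [Finset.mem_filter] at ha hb
      by_contra hab
      have : s ≤ (a ∩ b).card :=
        le_trans hT (Finset.card_le_card (Finset.subset_inter ha.2 hb.2))
      exact absurd (hFfar a ha.1 b hb.1 hab) (not_lt.mpr this)
    have := machine F hFE s hsn hbase s ∅ (by simp)
    simpa [Finset.filter_true_of_mem] using this
  -- bound on each cluster piece
  set t := n - s + 1 with ht
  have hTcount : ∀ T : Finset V, T.card = t → ({f ∈ E | T ⊆ f}).card ≤ n ^ (s - 1) := by
    intro T hTc
    have hbase : ∀ T : Finset V, n ≤ T.card → ({f ∈ E | T ⊆ f}).card ≤ 1 := by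
      intro T hT
      rw [Finset.card_le_one]
      intro a ha b hb
      simp only [Finset.mem_filter] at ha hb
      have ha' : T = a := Finset.eq_of_subset_of_card_le ha.2 (by rw [huniform a ha.1]; exact hT)
      have hb' : T = b := Finset.eq_of_subset_of_card_le hb.2 (by rw [huniform b hb.1]; exact hT)
      rw [← ha', ← hb']
    exact machine E subset_rfl n le_rfl hbase (s - 1) T (by omega)
  -- covering of E
  have hcover : E ⊆ F.biUnion (fun e0 => (e0.powersetCard t).biUnion (fun T => {f ∈ E | T ⊆ f})) := by
    intro f hf
    obtain ⟨e0, he0, hclose⟩ := hrep f hf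
    obtain ⟨T, hTsub, hTcard⟩ := Finset.exists_subset_card_eq (show t ≤ (f ∩ e0).card by omega)
    refine Finset.mem_biUnion.mpr ⟨e0, he0, Finset.mem_biUnion.mpr ⟨T, ?_, ?_⟩⟩
    · exact Finset.mem_powersetCard.mpr ⟨hTsub.trans Finset.inter_subset_right, hTcard⟩
    · exact Finset.mem_filter.mpr ⟨hf, hTsub.trans Finset.inter_subset_left⟩
  -- the total count
  have hchoose : n.choose t ≤ n ^ (s - 1) := by
    have h1 : t = n - (s - 1) := by omega
    rw [h1, Nat.choose_symm (by omega)]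
    exact Nat.choose_le_pow n (s - 1)
  have hEcard : E.card ≤ n ^ (3 * s) := by
    calc E.card ≤ (F.biUnion (fun e0 => (e0.powersetCard t).biUnion
            (fun T => {f ∈ E | T ⊆ f}))).card := Finset.card_le_card hcover
      _ ≤ ∑ e0 ∈ F, ((e0.powersetCard t).biUnion (fun T => {f ∈ E | T ⊆ f})).card :=
            Finset.card_biUnion_le
      _ ≤ ∑ e0 ∈ F, ∑ T ∈ e0.powersetCard t, ({f ∈ E | T ⊆ f}).card :=
            Finset.sum_le_sum fun _ _ => Finset.card_biUnion_le
      _ ≤ ∑ e0 ∈ F, ∑ T ∈ e0.powersetCard t, n ^ (s - 1) := by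
            refine Finset.sum_le_sum fun e0 he0 => Finset.sum_le_sum fun T hT => ?_
            exact hTcount T (Finset.mem_powersetCard.mp hT).2
      _ = ∑ e0 ∈ F, (e0.powersetCard t).card * n ^ (s - 1) := by
            simp [Finset.sum_const, smul_eq_mul]
      _ ≤ ∑ e0 ∈ F, n ^ (s - 1) * n ^ (s - 1) := by
            refine Finset.sum_le_sum fun e0 he0 => Nat.mul_le_mul_right _ ?_
            rw [Finset.card_powersetCard, huniform e0 (hFE he0)]
            exact hchoose
      _ = F.card * (n ^ (s - 1) * n ^ (s - 1)) := by rw [Finset.sum_const, smul_eq_mul]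
      _ ≤ n ^ s * (n ^ (s - 1) * n ^ (s - 1)) := Nat.mul_le_mul_right _ hFcard
      _ = n ^ (s + (s - 1) + (s - 1)) := by rw [pow_add, pow_add]; ring
      _ ≤ n ^ (3 * s) := Nat.pow_le_pow_right (by omega) (by omega)
  -- contradiction with hE
  have h1n : (1 : ℝ) ≤ (n : ℝ) := by exact_mod_cast le_trans (by norm_num) hn
  have hfinal : (E.card : ℝ) ≤ (n : ℝ) ^ ((n : ℝ) - 1 / 2) := by
    calc (E.card : ℝ) ≤ ((n ^ (3 * s) : ℕ) : ℝ) := by exact_mod_cast hEcard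
      _ = (n : ℝ) ^ (((3 * s : ℕ) : ℝ)) := by
            rw [Real.rpow_natCast]; push_cast; ring
      _ ≤ (n : ℝ) ^ ((n : ℝ) - 1 / 2) := by
            refine Real.rpow_le_rpow_of_exponent_le h1n ?_
            have hc : (3 * (s : ℝ) + 1) ≤ (n : ℝ) := by exact_mod_cast h3s
            push_cast
            linarith
  linarith
end

section
/- Let H = (V,E) be an n-uniform clique with χ(H) = 3 and n ≥ 100, and let F ⊆ E with |F| > n^{n-1/2}. Then there exist f₁, f₂ ∈ F with ⌊√n⌋ ≤ |f₁ ∩ f₂| ≤ n − ⌊√n⌋. -/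
/-- Branching count: edges of a clique containing a fixed set `A` number at most `n ^ k`
when `n ≤ A.card + k`, given that every small set misses some edge. -/
theorem count_aux {V : Type*} [DecidableEq V] (n : ℕ) (hn : 1 ≤ n) (E : Finset (Finset V))
    (huniform : ∀ e ∈ E, e.card = n)
    (hclique : ∀ e ∈ E, ∀ f ∈ E, (e ∩ f).Nonempty)
    (hpick : ∀ A : Finset V, A.card < n → ∃ e ∈ E, Disjoint e A) :
    ∀ (k : ℕ) (A : Finset V) (G : Finset (Finset V)),
      (∀ f ∈ G, f ∈ E ∧ A ⊆ f) → n ≤ A.card + k → G.card ≤ n ^ k := by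
  intro k
  induction k with
  | zero =>
    intro A G hG hcard
    have : G ⊆ {A} := by
      intro f hf
      obtain ⟨hfE, hAf⟩ := hG f hf
      have hfc : f.card = n := huniform f hfE
      have : f = A := (Finset.eq_of_subset_of_card_le hAf (by omega)).symm
      simp [this]
    simpa using Finset.card_le_card this
  | succ k ih =>
    intro A G hG hcard
    by_cases hA : n ≤ A.card
    · have : G ⊆ {A} := by
        intro f hf
        obtain ⟨hfE, hAf⟩ := hG f hf
        have hfc : f.card = n := huniform f hfE
        have : f = A := (Finset.eq_of_subset_of_card_le hAf (by omega)).symm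
        simp [this]
      have h1 : G.card ≤ 1 := by simpa using Finset.card_le_card this
      have hn1 : 1 ≤ n ^ (k + 1) := Nat.one_le_pow _ _ hn
      omega
    · push_neg at hA
      obtain ⟨e, heE, hdisj⟩ := hpick A hA
      have hsub : G ⊆ e.biUnion (fun x => G.filter (fun f => x ∈ f)) := by
        intro f hf
        obtain ⟨hfE, hAf⟩ := hG f hf
        obtain ⟨x, hx⟩ := hclique e heE f hfE
        simp only [Finset.mem_inter] at hx
        exact Finset.mem_biUnion.2 ⟨x, hx.1, Finset.mem_filter.2 ⟨hf, hx.2⟩⟩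
      have hec : e.card = n := huniform e heE
      calc G.card ≤ (e.biUnion (fun x => G.filter (fun f => x ∈ f))).card :=
            Finset.card_le_card hsub
        _ ≤ ∑ x ∈ e, (G.filter (fun f => x ∈ f)).card := Finset.card_biUnion_le
        _ ≤ ∑ _x ∈ e, n ^ k := by
            apply Finset.sum_le_sum
            intro x hx
            apply ih (insert x A)
            · intro f hf
              simp only [Finset.mem_filter] at hf
              obtain ⟨hfE, hAf⟩ := hG f hf.1
              exact ⟨hfE, Finset.insert_subset hf.2 hAf⟩
            · have hxA : x ∉ A := Finset.disjoint_left.1 hdisj hx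
              rw [Finset.card_insert_of_notMem hxA]
              omega
        _ = n ^ (k + 1) := by rw [Finset.sum_const, hec]; ring

/-- Tree lemma: there is a family of at most `n ^ k` sets of size `A.card + k`, each
containing `A`, such that every edge of `G` contains one of them. -/
theorem tree_aux {V : Type*} [DecidableEq V] (n : ℕ) (E : Finset (Finset V))
    (huniform : ∀ e ∈ E, e.card = n)
    (hclique : ∀ e ∈ E, ∀ f ∈ E, (e ∩ f).Nonempty)
    (hpick : ∀ A : Finset V, A.card < n → ∃ e ∈ E, Disjoint e A) :
    ∀ (k : ℕ) (A : Finset V) (G : Finset (Finset V)),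
      (∀ f ∈ G, f ∈ E ∧ A ⊆ f) → A.card + k ≤ n →
      ∃ T : Finset (Finset V), T.card ≤ n ^ k ∧ (∀ S ∈ T, S.card = A.card + k) ∧
        ∀ f ∈ G, ∃ S ∈ T, S ⊆ f := by
  intro k
  induction k with
  | zero =>
    intro A G hG _
    refine ⟨{A}, by simp, by simp, fun f hf => ⟨A, by simp, (hG f hf).2⟩⟩
  | succ k ih =>
    intro A G hG hcard
    have hA : A.card < n := by omega
    obtain ⟨e, heE, hdisj⟩ := hpick A hA
    have key : ∀ x : V, ∃ T : Finset (Finset V), x ∈ e →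
        (T.card ≤ n ^ k ∧ (∀ S ∈ T, S.card = A.card + 1 + k) ∧
          ∀ f ∈ G.filter (fun f => x ∈ f), ∃ S ∈ T, S ⊆ f) := by
      intro x
      by_cases hx : x ∈ e
      · have hxA : x ∉ A := Finset.disjoint_left.1 hdisj hx
        obtain ⟨T, hT1, hT2, hT3⟩ := ih (insert x A) (G.filter (fun f => x ∈ f))
          (by
            intro f hf
            simp only [Finset.mem_filter] at hf
            obtain ⟨hfE, hAf⟩ := hG f hf.1
            exact ⟨hfE, Finset.insert_subset hf.2 hAf⟩)
          (by rw [Finset.card_insert_of_notMem hxA]; omega)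
        refine ⟨T, fun _ => ⟨hT1, ?_, hT3⟩⟩
        intro S hS
        rw [hT2 S hS, Finset.card_insert_of_notMem hxA]
      · exact ⟨∅, fun h => absurd h hx⟩
    choose t ht using key
    refine ⟨e.biUnion t, ?_, ?_, ?_⟩
    · calc (e.biUnion t).card ≤ ∑ x ∈ e, (t x).card := Finset.card_biUnion_le
        _ ≤ ∑ _x ∈ e, n ^ k := Finset.sum_le_sum (fun x hx => (ht x hx).1)
        _ ≤ n * n ^ k := by
            rw [Finset.sum_const, smul_eq_mul]
            exact Nat.mul_le_mul_right _ (le_of_eq (huniform e heE))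
        _ = n ^ (k + 1) := by ring
    · intro S hS
      obtain ⟨x, hx, hSx⟩ := Finset.mem_biUnion.1 hS
      have := (ht x hx).2.1 S hSx
      omega
    · intro f hf
      obtain ⟨hfE, hAf⟩ := hG f hf
      obtain ⟨x, hx⟩ := hclique e heE f hfE
      simp only [Finset.mem_inter] at hx
      obtain ⟨S, hS, hSf⟩ := (ht x hx.1).2.2 f (Finset.mem_filter.2 ⟨hf, hx.2⟩)
      exact ⟨S, Finset.mem_biUnion.2 ⟨x, hx.1, hS⟩, hSf⟩

theorem exists_medium_intersection_subfamily {V : Type*} [DecidableEq V] (n : ℕ) (hn : 100 ≤ n)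
    (E : Finset (Finset V))
    (huniform : ∀ e ∈ E, e.card = n)
    (hclique : ∀ e ∈ E, ∀ f ∈ E, (e ∩ f).Nonempty)
    (hno2 : ¬ ∃ c : V → Fin 2, ∀ e ∈ E, ∃ u ∈ e, ∃ v ∈ e, c u ≠ c v)
    (hyes3 : ∃ c : V → Fin 3, ∀ e ∈ E, ∃ u ∈ e, ∃ v ∈ e, c u ≠ c v)
    (F : Finset (Finset V)) (hF : F ⊆ E)
    (hFcard : (F.card : ℝ) > (n : ℝ) ^ ((n : ℝ) - 1 / 2)) :
    ∃ f₁ ∈ F, ∃ f₂ ∈ F,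
      Nat.sqrt n ≤ (f₁ ∩ f₂).card ∧ (f₁ ∩ f₂).card ≤ n - Nat.sqrt n := by
  by_contra hcon
  push_neg at hcon
  set s := Nat.sqrt n with hs
  have hss : s * s ≤ n := by have := Nat.sqrt_le' n; rwa [pow_two] at this
  have h10 : 10 ≤ s := Nat.le_sqrt.2 (by omega)
  have hsn : s ≤ n := le_trans (Nat.le_mul_of_pos_left s (by omega)) hss
  have h3s : 3 * s ≤ s * s := Nat.mul_le_mul_right s (by omega)
  -- every set of size < n misses some edge (from non-2-colorability)
  have hpick : ∀ A : Finset V, A.card < n → ∃ e ∈ E, Disjoint e A := by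
    intro A hA
    by_contra hno
    push_neg at hno
    apply hno2
    refine ⟨fun v => if v ∈ A then 0 else 1, fun e he => ?_⟩
    obtain ⟨u, hu1, hu2⟩ := Finset.not_disjoint_iff.1 (hno e he)
    have hnsub : ¬ e ⊆ A := by
      intro h
      have := Finset.card_le_card h
      have := huniform e he
      omega
    obtain ⟨v, hv, hvA⟩ := Finset.not_subset.1 hnsub
    exact ⟨u, hu1, v, hv, by simp [hu2, hvA]⟩
  -- tree of s-subsets
  obtain ⟨T, hT1, hT2, hT3⟩ := tree_aux n E huniform hclique hpick s ∅ F
    (fun f hf => ⟨hF hf, Finset.empty_subset f⟩) (by simpa using hsn)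
  simp only [Finset.card_empty, Nat.zero_add] at hT1 hT2
  have hFsub : F ⊆ T.biUnion (fun S => F.filter (fun f => S ⊆ f)) := by
    intro f hf
    obtain ⟨S, hS, hSf⟩ := hT3 f hf
    exact Finset.mem_biUnion.2 ⟨S, hS, Finset.mem_filter.2 ⟨hf, hSf⟩⟩
  -- bound each bucket
  have key : ∀ S ∈ T, (F.filter (fun f => S ⊆ f)).card ≤ s * n ^ (s - 1) * n ^ (s - 1) := by
    intro S hS
    set B := F.filter (fun f => S ⊆ f) with hB
    rcases B.eq_empty_or_nonempty with hBe | ⟨f₀, hf₀⟩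
    · simp [hBe]
    · have hf₀F : f₀ ∈ F := (Finset.mem_filter.1 hf₀).1
      have hf₀E : f₀ ∈ E := hF hf₀F
      have hf₀c : f₀.card = n := huniform _ hf₀E
      have hsd : ∀ f ∈ B, (f₀ \ f).card < s := by
        intro f hf
        obtain ⟨hfF, hSf⟩ := Finset.mem_filter.1 hf
        have h1 : s ≤ (f ∩ f₀).card := by
          have hsub : S ⊆ f ∩ f₀ := Finset.subset_inter hSf (Finset.mem_filter.1 hf₀).2
          have := Finset.card_le_card hsub
          have := hT2 S hS
          omega
        have h2 := hcon f hfF f₀ hf₀F h1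
        have h3 : (f₀ \ f).card + (f₀ ∩ f).card = f₀.card :=
          Finset.card_sdiff_add_card_inter f₀ f
        have h4 : f₀ ∩ f = f ∩ f₀ := Finset.inter_comm f₀ f
        rw [h4] at h3
        have h5 : (f ∩ f₀).card ≤ n := by
          have := Finset.card_le_card (Finset.inter_subset_right : f ∩ f₀ ⊆ f₀)
          omega
        omega
      set Ds : Finset (Finset V) := (Finset.range s).biUnion (fun d => Finset.powersetCard d f₀)
        with hDs
      have hcover : B ⊆ Ds.biUnion (fun D => B.filter (fun f => f₀ \ D ⊆ f)) := by
        intro f hf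
        refine Finset.mem_biUnion.2 ⟨f₀ \ f, ?_, Finset.mem_filter.2 ⟨hf, ?_⟩⟩
        · exact Finset.mem_biUnion.2 ⟨(f₀ \ f).card, Finset.mem_range.2 (hsd f hf),
            Finset.mem_powersetCard.2 ⟨Finset.sdiff_subset, rfl⟩⟩
        · rw [Finset.sdiff_sdiff_self_left]
          exact Finset.inter_subset_right
      have hDcard : Ds.card ≤ s * n ^ (s - 1) := by
        calc Ds.card ≤ ∑ d ∈ Finset.range s, (Finset.powersetCard d f₀).card :=
              Finset.card_biUnion_le
          _ ≤ ∑ _d ∈ Finset.range s, n ^ (s - 1) := by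
              apply Finset.sum_le_sum
              intro d hd
              rw [Finset.card_powersetCard, hf₀c]
              calc n.choose d ≤ n ^ d := Nat.choose_le_pow n d
                _ ≤ n ^ (s - 1) := Nat.pow_le_pow_right (by omega)
                    (by simp only [Finset.mem_range] at hd; omega)
          _ = s * n ^ (s - 1) := by rw [Finset.sum_const, Finset.card_range, smul_eq_mul]
      calc B.card ≤ (Ds.biUnion (fun D => B.filter (fun f => f₀ \ D ⊆ f))).card :=
            Finset.card_le_card hcover
        _ ≤ ∑ D ∈ Ds, (B.filter (fun f => f₀ \ D ⊆ f)).card := Finset.card_biUnion_le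
        _ ≤ ∑ _D ∈ Ds, n ^ (s - 1) := by
            apply Finset.sum_le_sum
            intro D hD
            obtain ⟨d, hd, hD2⟩ := Finset.mem_biUnion.1 hD
            obtain ⟨hDsub, hDcard'⟩ := Finset.mem_powersetCard.1 hD2
            simp only [Finset.mem_range] at hd
            apply count_aux n (by omega) E huniform hclique hpick (s - 1) (f₀ \ D)
            · intro f hf
              obtain ⟨hfB, hsub⟩ := Finset.mem_filter.1 hf
              exact ⟨hF (Finset.mem_filter.1 hfB).1, hsub⟩
            · have := Finset.card_sdiff_of_subset hDsub
              omega
        _ = Ds.card * n ^ (s - 1) := by rw [Finset.sum_const, smul_eq_mul]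
        _ ≤ s * n ^ (s - 1) * n ^ (s - 1) := Nat.mul_le_mul_right _ hDcard
  -- total bound
  have hcount : F.card ≤ n ^ s * (s * n ^ (s - 1) * n ^ (s - 1)) := by
    calc F.card ≤ (T.biUnion (fun S => F.filter (fun f => S ⊆ f))).card :=
          Finset.card_le_card hFsub
      _ ≤ ∑ S ∈ T, (F.filter (fun f => S ⊆ f)).card := Finset.card_biUnion_le
      _ ≤ ∑ _S ∈ T, s * n ^ (s - 1) * n ^ (s - 1) := Finset.sum_le_sum key
      _ = T.card * (s * n ^ (s - 1) * n ^ (s - 1)) := by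
          rw [Finset.sum_const, smul_eq_mul]
      _ ≤ n ^ s * (s * n ^ (s - 1) * n ^ (s - 1)) := Nat.mul_le_mul_right _ hT1
  have hfin : F.card ≤ n ^ (n - 1) := by
    have h1 : n ^ s * (s * n ^ (s - 1) * n ^ (s - 1)) ≤
        n ^ s * (n ^ 1 * n ^ (s - 1) * n ^ (s - 1)) := by
      apply Nat.mul_le_mul_left
      apply Nat.mul_le_mul_right
      apply Nat.mul_le_mul_right
      rw [pow_one]; exact hsn
    have h2 : n ^ s * (n ^ 1 * n ^ (s - 1) * n ^ (s - 1)) = n ^ (s + (1 + (s - 1) + (s - 1))) := by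
      rw [← pow_add, ← pow_add, ← pow_add]
    have h3 : n ^ (s + (1 + (s - 1) + (s - 1))) ≤ n ^ (n - 1) :=
      Nat.pow_le_pow_right (by omega) (by omega)
    omega
  -- contradiction with the real inequality
  have hle : (F.card : ℝ) ≤ (n : ℝ) ^ ((n : ℝ) - 1 / 2) := by
    have h1 : (F.card : ℝ) ≤ ((n ^ (n - 1) : ℕ) : ℝ) := Nat.cast_le.2 hfin
    have h2 : ((n ^ (n - 1) : ℕ) : ℝ) = (n : ℝ) ^ (((n - 1 : ℕ) : ℕ) : ℝ) := by
      push_cast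
      rw [Real.rpow_natCast]
    have h3 : (n : ℝ) ^ (((n - 1 : ℕ) : ℕ) : ℝ) ≤ (n : ℝ) ^ ((n : ℝ) - 1 / 2) := by
      apply Real.rpow_le_rpow_of_exponent_le
      · exact_mod_cast (by omega : 1 ≤ n)
      · have hc : ((n - 1 : ℕ) : ℝ) = (n : ℝ) - 1 := by
          have : (1 : ℕ) ≤ n := by omega
          push_cast [this]
          ring
        rw [hc]
        linarith
    linarith
  linarith
end

section
/- For n ∈ ℕ and t ∈ {1,…,n}, set t' = min{t, 4√n ln n} and N(t) = (t+1)(n − √n/4)^{t'−1} n^{n−t'}. Then N(t) = O(n^{n−1/2} ln n) uniformly in t; in particular there exists n₀ such that N(t) ≤ 10 n^{n−1/2} ln n for all n ≥ n₀ and all t ∈ {1,…,n}. -/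
set_option maxHeartbeats 1600000 in
open Real in
theorem N_t_bound :
    ∃ n₀ : ℕ, ∀ n : ℕ, n₀ ≤ n → ∀ t : ℕ, 1 ≤ t → t ≤ n →
      ((t : ℝ) + 1) *
          ((n : ℝ) - Real.sqrt n / 4) ^
            (min (t : ℝ) (4 * Real.sqrt n * Real.log n) - 1) *
          (n : ℝ) ^ ((n : ℝ) - min (t : ℝ) (4 * Real.sqrt n * Real.log n)) ≤
        10 * (n : ℝ) ^ ((n : ℝ) - 1 / 2) * Real.log n := by
  refine ⟨3, fun n hn t ht htn => ?_⟩
  have hn1 : (1:ℝ) ≤ (n:ℝ) := by exact_mod_cast le_trans (by norm_num) hn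
  have hn3 : (3:ℝ) ≤ (n:ℝ) := by exact_mod_cast hn
  have hnpos : (0:ℝ) < (n:ℝ) := by linarith
  set s := Real.sqrt n with hs
  set L := Real.log n with hL
  set m := min (t:ℝ) (4 * s * L) with hm
  have hs1 : (1:ℝ) ≤ s := by
    rw [hs]; exact Real.one_le_sqrt.mpr hn1
  have hspos : (0:ℝ) < s := by linarith
  have hs2 : s ^ 2 = (n:ℝ) := by rw [hs, Real.sq_sqrt hnpos.le]
  have hsn : s ≤ (n:ℝ) := by nlinarith
  have hL1 : (1:ℝ) < L := by
    rw [hL, show (1:ℝ) = Real.log (Real.exp 1) by rw [Real.log_exp]]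
    exact Real.log_lt_log (Real.exp_pos 1) (lt_of_lt_of_le (by
      have := Real.exp_one_lt_d9; linarith) hn3)
  have hsL : (1:ℝ) ≤ s * L := by nlinarith
  set q : ℝ := 1 - 1 / (4 * s) with hq
  have hq0 : (0:ℝ) ≤ q := by
    rw [hq]
    have : 1 / (4 * s) ≤ 1 / 4 := by
      rw [div_le_div_iff₀ (by linarith) (by norm_num)]; linarith
    linarith
  have hq1 : q ≤ 1 := by
    rw [hq]; have : (0:ℝ) < 1 / (4 * s) := by positivity
    linarith
  have hbq : (n:ℝ) - s / 4 = (n:ℝ) * q := by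
    rw [hq]; field_simp; nlinarith
  have ht1 : (1:ℝ) ≤ (t:ℝ) := by exact_mod_cast ht
  have htn' : (t:ℝ) ≤ (n:ℝ) := by exact_mod_cast htn
  have hm1 : (1:ℝ) ≤ m := by
    rw [hm]; exact le_min ht1 (by nlinarith)
  -- key claim
  have key : ((t:ℝ) + 1) * q ^ (m - 1) ≤ 10 * s * L := by
    rcases le_or_gt (t:ℝ) (4 * s * L) with hc | hc
    · have hmt : m = (t:ℝ) := min_eq_left hc
      have hq' : q ^ (m - 1) ≤ 1 :=
        Real.rpow_le_one hq0 hq1 (by linarith)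
      have h1 : ((t:ℝ) + 1) * q ^ (m - 1) ≤ (t:ℝ) + 1 := by
        nlinarith [Real.rpow_nonneg hq0 (m - 1)]
      have h2 : (t:ℝ) + 1 ≤ 5 * (s * L) := by nlinarith
      nlinarith
    · have hmt : m = 4 * s * L := min_eq_right hc.le
      have hqe : q ≤ Real.exp (-(1 / (4 * s))) := by
        have := Real.add_one_le_exp (-(1 / (4 * s)))
        rw [hq]; linarith
      have h1 : q ^ (m - 1) ≤ Real.exp (-(1 / (4 * s))) ^ (m - 1) :=
        Real.rpow_le_rpow hq0 hqe (by linarith)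
      have h2 : Real.exp (-(1 / (4 * s))) ^ (m - 1) =
          Real.exp (-(1 / (4 * s)) * (m - 1)) := by
        rw [← Real.exp_mul]
      have h3 : -(1 / (4 * s)) * (m - 1) = -L + 1 / (4 * s) := by
        rw [hmt]; field_simp; ring
      have h4 : Real.exp (-L + 1 / (4 * s)) = Real.exp (1 / (4 * s)) / (n:ℝ) := by
        rw [Real.exp_add, Real.exp_neg, hL, Real.exp_log hnpos]; ring
      have h5 : Real.exp (1 / (4 * s)) ≤ 3 := by
        have hle : (1:ℝ) / (4 * s) ≤ 1 := by
          rw [div_le_one (by linarith)]; linarith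
        calc Real.exp (1 / (4 * s)) ≤ Real.exp 1 := Real.exp_le_exp.mpr hle
          _ ≤ 3 := by have := Real.exp_one_lt_d9; linarith
      have hqm : q ^ (m - 1) ≤ 3 / (n:ℝ) := by
        calc q ^ (m - 1) ≤ Real.exp (-(1 / (4 * s)) * (m - 1)) := by
              rw [← h2]; exact h1
          _ = Real.exp (1 / (4 * s)) / (n:ℝ) := by rw [h3, h4]
          _ ≤ 3 / (n:ℝ) := by gcongr
      have h6 : ((t:ℝ) + 1) * q ^ (m - 1) ≤ ((n:ℝ) + 1) * (3 / (n:ℝ)) := by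
        apply mul_le_mul (by linarith) hqm (Real.rpow_nonneg hq0 _) (by linarith)
      have h7 : ((n:ℝ) + 1) * (3 / (n:ℝ)) ≤ 4 := by
        rw [← mul_div_assoc, div_le_iff₀ hnpos]; linarith
      nlinarith
  -- rewrite both sides
  have hLHS : ((t:ℝ) + 1) * ((n:ℝ) - s / 4) ^ (m - 1) * (n:ℝ) ^ ((n:ℝ) - m) =
      (((t:ℝ) + 1) * q ^ (m - 1)) * (n:ℝ) ^ ((n:ℝ) - 1) := by
    rw [hbq, Real.mul_rpow hnpos.le hq0]
    have : ((t:ℝ) + 1) * ((n:ℝ) ^ (m - 1) * q ^ (m - 1)) * (n:ℝ) ^ ((n:ℝ) - m) =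
        (((t:ℝ) + 1) * q ^ (m - 1)) * ((n:ℝ) ^ (m - 1) * (n:ℝ) ^ ((n:ℝ) - m)) := by
      ring
    rw [this, ← Real.rpow_add hnpos,
      show m - 1 + ((n:ℝ) - m) = (n:ℝ) - 1 by ring]
  have hRHS : 10 * (n:ℝ) ^ ((n:ℝ) - 1/2) * L = (10 * s * L) * (n:ℝ) ^ ((n:ℝ) - 1) := by
    rw [show ((n:ℝ) - 1/2) = ((n:ℝ) - 1) + 1/2 by ring, Real.rpow_add hnpos,
      show ((n:ℝ) ^ (1/2 : ℝ)) = s by rw [hs, Real.sqrt_eq_rpow]]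
    ring
  rw [hLHS, hRHS]
  exact mul_le_mul_of_nonneg_right key (Real.rpow_nonneg hnpos.le _)
end

section
/- Let H = (V,E) be an n-uniform clique with χ(H) = 3, n ≥ 10000. Set T' = min{T, ⌈4√n ln n⌉} where T = max{t : every e ∈ E satisfies |e ∩ B(H)| ≥ t} and B(H) = {v : deg v > |E|/n²}. If there is a set I ⊆ V with |I| = T' and |E(I)| > n^{n−T'}, or a set I with |I| = T'+1 and |E(I)| > n^{n−T'−1}, then a contradiction follows; hence no such I exists. -/
private lemma erdos_lovasz_bound {V : Type*} [DecidableEq V] (n : ℕ) (hn : 1 ≤ n)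
    (E : Finset (Finset V))
    (huniform : ∀ e ∈ E, e.card = n)
    (hclique : ∀ e ∈ E, ∀ f ∈ E, (e ∩ f).Nonempty)
    (hno2 : ¬ ∃ c : V → Fin 2, ∀ e ∈ E, ∃ u ∈ e, ∃ v ∈ e, c u ≠ c v) :
    ∀ (k : ℕ) (W : Finset V), n - W.card ≤ k →
      (E.filter (fun e => W ⊆ e)).card ≤ n ^ (n - W.card) := by
  push_neg at hno2
  intro k
  induction k with
  | zero =>
    intro W hW
    have hnW : n ≤ W.card := Nat.le_of_sub_eq_zero (Nat.le_zero.mp hW)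
    have hsub : E.filter (fun e => W ⊆ e) ⊆ {W} := by
      intro e he
      simp only [Finset.mem_filter] at he
      have hcard : e.card ≤ W.card := by rw [huniform e he.1]; exact hnW
      have := Finset.eq_of_subset_of_card_le he.2 hcard
      simp [this]
    calc (E.filter (fun e => W ⊆ e)).card ≤ ({W} : Finset (Finset V)).card :=
          Finset.card_le_card hsub
      _ = 1 := Finset.card_singleton W
      _ ≤ n ^ (n - W.card) := Nat.one_le_pow _ _ hn
  | succ k ih =>
    intro W hW
    by_cases hnW : n ≤ W.card
    · -- same base case
      have hsub : E.filter (fun e => W ⊆ e) ⊆ {W} := by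
        intro e he
        simp only [Finset.mem_filter] at he
        have hcard : e.card ≤ W.card := by rw [huniform e he.1]; exact hnW
        have := Finset.eq_of_subset_of_card_le he.2 hcard
        simp [this]
      calc (E.filter (fun e => W ⊆ e)).card ≤ 1 := by
            simpa using Finset.card_le_card hsub
        _ ≤ n ^ (n - W.card) := Nat.one_le_pow _ _ hn
    · push_neg at hnW
      -- find an edge disjoint from W using non-2-colorability
      obtain ⟨f, hfE, hfmono⟩ := hno2 (fun v => if v ∈ W then (0 : Fin 2) else 1)
      have hfne : f.Nonempty := by
        rw [← Finset.card_pos, huniform f hfE]; omega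
      obtain ⟨u, hu⟩ := hfne
      have hfdisj : ∀ v ∈ f, v ∉ W := by
        by_cases huW : u ∈ W
        · exfalso
          have hfsub : f ⊆ W := by
            intro v hv
            have := hfmono u hu v hv
            simp only [huW, if_true] at this
            by_contra hvW
            simp [hvW] at this
          have := Finset.card_le_card hfsub
          rw [huniform f hfE] at this; omega
        · intro v hv hvW
          have := hfmono u hu v hv
          simp [huW, hvW] at this
      -- cover E(W) by the sets E(W ∪ {v}), v ∈ f
      have hcover : E.filter (fun e => W ⊆ e) ⊆
          f.biUnion (fun v => E.filter (fun e => insert v W ⊆ e)) := by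
        intro g hg
        simp only [Finset.mem_filter] at hg
        obtain ⟨v, hv⟩ := hclique g hg.1 f hfE
        simp only [Finset.mem_inter] at hv
        refine Finset.mem_biUnion.mpr ⟨v, hv.2, ?_⟩
        simp only [Finset.mem_filter]
        exact ⟨hg.1, Finset.insert_subset hv.1 hg.2⟩
      have hstep : ∀ v ∈ f,
          (E.filter (fun e => insert v W ⊆ e)).card ≤ n ^ (n - W.card - 1) := by
        intro v hv
        have hvW : v ∉ W := hfdisj v hv
        have hcardins : (insert v W).card = W.card + 1 := Finset.card_insert_of_notMem hvW
        have := ih (insert v W) (by omega)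
        rwa [hcardins, Nat.sub_add_eq] at this
      calc (E.filter (fun e => W ⊆ e)).card
          ≤ (f.biUnion (fun v => E.filter (fun e => insert v W ⊆ e))).card :=
            Finset.card_le_card hcover
        _ ≤ ∑ v ∈ f, (E.filter (fun e => insert v W ⊆ e)).card :=
            Finset.card_biUnion_le
        _ ≤ ∑ _v ∈ f, n ^ (n - W.card - 1) := Finset.sum_le_sum hstep
        _ = n * n ^ (n - W.card - 1) := by
            rw [Finset.sum_const, smul_eq_mul, huniform f hfE]
        _ = n ^ (n - W.card) := by
            rw [← pow_succ']
            congr 1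
            omega

theorem terminal_step_no_large_E_I {V : Type*} [DecidableEq V] (n : ℕ) (hn : 10000 ≤ n)
    (E : Finset (Finset V))
    (huniform : ∀ e ∈ E, e.card = n)
    (hclique : ∀ e ∈ E, ∀ f ∈ E, (e ∩ f).Nonempty)
    (hno2 : ¬ ∃ c : V → Fin 2, ∀ e ∈ E, ∃ u ∈ e, ∃ v ∈ e, c u ≠ c v)
    (hyes3 : ∃ c : V → Fin 3, ∀ e ∈ E, ∃ u ∈ e, ∃ v ∈ e, c u ≠ c v)
    (T : ℕ)
    (hT : ∀ e ∈ E, T ≤ (e.filter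
      (fun v => ((E.filter (fun f => v ∈ f)).card : ℝ) > (E.card : ℝ) / (n : ℝ) ^ 2)).card)
    (hTmax : ∀ t : ℕ, (∀ e ∈ E, t ≤ (e.filter
      (fun v => ((E.filter (fun f => v ∈ f)).card : ℝ) > (E.card : ℝ) / (n : ℝ) ^ 2)).card)
      → t ≤ T)
    (T' : ℕ) (hT' : T' = min T ⌈4 * Real.sqrt n * Real.log n⌉₊) :
    ¬ ((∃ I : Finset V, I.card = T' ∧
          n ^ (n - T') < (E.filter (fun e => I ⊆ e)).card) ∨
        (∃ I : Finset V, I.card = T' + 1 ∧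
          n ^ (n - T' - 1) < (E.filter (fun e => I ⊆ e)).card)) := by
  have hEL := erdos_lovasz_bound n (by omega) E huniform hclique hno2
  rintro (⟨I, hI, hlt⟩ | ⟨I, hI, hlt⟩)
  · have := hEL (n - I.card) I le_rfl
    rw [hI] at this
    omega
  · have := hEL (n - I.card) I le_rfl
    rw [hI, Nat.sub_add_eq] at this
    omega
end
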